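/- arXiv:1611.03147 — 5 statements merged into one kernel-verified Lean document; each statement's English description precedes it below -/
import Mathlib

section
/- If a Motzkin path x of length 2n (n > 1) has an up step at height zero in position n (i.e., starting at height 0 at x-coordinate n-1) or a down step ending at height zero in position n+1, then the area of x is strictly less than n^2/2 + 2n. -/
/-- A step of an `s`-colored Motzkin path: an up step with a color,
a flat step, or a down step with a color. -/
inductive MStep (s : ℕ) : Type
  | up (c : Fin s) : MStep s
  | flat : MStep s
  | down (c : Fin s) : MStep s
  deriving DecidableEq

/-- Height change of a step. -/
def MStep.h {s : ℕ} : MStep s → ℤ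
  | .up _ => 1
  | .flat => 0
  | .down _ => -1

/-- Height of the path `x` after `j` steps. -/
def height {s : ℕ} (x : List (MStep s)) (j : ℕ) : ℤ :=
  ((x.take j).map MStep.h).sum

/-- Stack-based checker: `isMotzkinAux stack x` holds iff, starting with the
stack of colors of currently unmatched up steps, the list `x` stays weakly
above the axis, ends with an empty stack (height 0), and every down step
carries the color of its matching up step. -/
def isMotzkinAux {s : ℕ} : List (Fin s) → List (MStep s) → Prop
  | stack, [] => stack = []
  | stack, (MStep.up c) :: rest => isMotzkinAux (c :: stack) rest
  | stack, MStep.flat :: rest => isMotzkinAux stack rest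
  | [], (MStep.down _) :: _ => False
  | (c :: stack), (MStep.down c') :: rest => c = c' ∧ isMotzkinAux stack rest

/-- `x` is an `s`-colored Motzkin path (of its own length): it goes from
height 0 to height 0, never below the axis, with matched colors. -/
def isMotzkin {s : ℕ} (x : List (MStep s)) : Prop := isMotzkinAux [] x

/-- Twice the area between the path and the x-axis. -/
def area2 {s : ℕ} (x : List (MStep s)) : ℤ :=
  ∑ j ∈ Finset.range x.length, (height x j + height x (j + 1))

/-- The area between the path and the x-axis: a flat step at height `h`
contributes `h`, an up/down step between heights `h` and `h+1` contributes
`h + 1/2`. -/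
def area {s : ℕ} (x : List (MStep s)) : ℚ := (area2 x : ℚ) / 2

/-!
Heights of a Motzkin path change by at most one per step, so a path vanishing at `0`, `m` and
`2n` lies below the tent `min (j, m - j)` on `[0, m]` and below the analogous tent on `[m, 2n]`.
Twice the area over a window of length `m` is then at most `m² / 2`. An up step leaving the axis at
`n - 1`, or a down step reaching it at `n + 1`, makes the path vanish at `m = n ∓ 1`, so the area
is at most `((n - 1)² + (n + 1)²) / 4 = (n² + 1) / 2`.
-/

open Finset

lemma abs_height_succ_sub_le_one {s : ℕ} (x : List (MStep s)) (j : ℕ) :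
    |height x (j + 1) - height x j| ≤ 1 := by
  have hstep : height x (j + 1) = height x j + (x[j]?.toList.map MStep.h).sum := by
    simp [height, List.take_add_one]
  rw [hstep, add_sub_cancel_left]
  rcases x[j]? with _ | (c | _ | c) <;> simp [MStep.h]

lemma height_zero {s : ℕ} (x : List (MStep s)) : height x 0 = 0 := by
  simp [height]

lemma sum_map_h_of_isMotzkinAux {s : ℕ} :
    ∀ (stack : List (Fin s)) (x : List (MStep s)),
      isMotzkinAux stack x → (x.map MStep.h).sum = -(stack.length : ℤ)
  | _, [], h => by simp only [isMotzkinAux] at h; simp [h]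
  | stack, .up c :: rest, h => by
    simp [sum_map_h_of_isMotzkinAux (c :: stack) rest h, MStep.h]
  | stack, .flat :: rest, h => by
    simp [sum_map_h_of_isMotzkinAux stack rest h, MStep.h]
  | c :: stack, .down _ :: rest, h => by
    simp [sum_map_h_of_isMotzkinAux stack rest h.2, MStep.h]

lemma height_length_of_isMotzkin {s : ℕ} {x : List (MStep s)} (hx : isMotzkin x) :
    height x x.length = 0 := by
  simpa [height] using sum_map_h_of_isMotzkinAux [] x hx

lemma sum_range_min_sub_add_two (m : ℕ) :
    ∑ j ∈ range (m + 2), min j (m + 2 - j) = ∑ j ∈ range m, min j (m - j) + (m + 1) := by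
  have hshift : ∀ j ∈ range (m + 1), min (j + 1) (m + 2 - (j + 1)) = min j (m - j) + 1 := by
    intro j hj
    have := mem_range.1 hj
    omega
  rw [sum_range_succ' (fun j ↦ min j (m + 2 - j)), sum_congr rfl hshift, sum_add_distrib,
    sum_range_succ]
  simp

lemma four_mul_sum_range_min_le_sq : ∀ m : ℕ, 4 * ∑ j ∈ range m, min j (m - j) ≤ m ^ 2
  | 0 => by simp
  | 1 => by simp
  | m + 2 => by
    rw [sum_range_min_sub_add_two]
    have := four_mul_sum_range_min_le_sq m
    nlinarith

section LipschitzSequence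

variable {f : ℕ → ℤ}

lemma abs_sub_le_of_abs_succ_sub_le_one (hf : ∀ j, |f (j + 1) - f j| ≤ 1) (i d : ℕ) :
    |f (i + d) - f i| ≤ d := by
  induction d with
  | zero => simp
  | succ d ih =>
    calc |f (i + (d + 1)) - f i|
        ≤ |f (i + d + 1) - f (i + d)| + |f (i + d) - f i| := abs_sub_le _ _ _
      _ ≤ 1 + d := add_le_add (hf _) ih
      _ = (d + 1 : ℕ) := by push_cast; ring

lemma le_min_of_abs_succ_sub_le_one (hf : ∀ j, |f (j + 1) - f j| ≤ 1) {m : ℕ} (h0 : f 0 = 0)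
    (hm : f m = 0) {j : ℕ} (hj : j ≤ m) : f j ≤ (min j (m - j) : ℕ) := by
  have hleft := abs_sub_le_of_abs_succ_sub_le_one hf 0 j
  have hright := abs_sub_le_of_abs_succ_sub_le_one hf j (m - j)
  rw [zero_add, h0, sub_zero] at hleft
  rw [Nat.add_sub_cancel' hj, hm, zero_sub, abs_neg] at hright
  rw [Nat.cast_min]
  exact le_min (le_of_abs_le hleft) (le_of_abs_le hright)

lemma sum_range_add_succ_eq_two_mul_sum {m : ℕ} (h0 : f 0 = 0) (hm : f m = 0) :
    ∑ j ∈ range m, (f j + f (j + 1)) = 2 * ∑ j ∈ range m, f j := by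
  have hshift : ∑ j ∈ range m, f (j + 1) = ∑ j ∈ range m, f j := by
    have := sum_range_succ' f m
    rw [sum_range_succ, hm, h0] at this
    simpa using this.symm
  rw [sum_add_distrib, hshift, two_mul]

lemma two_mul_sum_range_le_sq (hf : ∀ j, |f (j + 1) - f j| ≤ 1) {m : ℕ} (h0 : f 0 = 0)
    (hm : f m = 0) : 2 * ∑ j ∈ range m, (f j + f (j + 1)) ≤ m ^ 2 := by
  have htent : ∑ j ∈ range m, f j ≤ ((∑ j ∈ range m, min j (m - j) : ℕ) : ℤ) := by
    rw [Nat.cast_sum]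
    exact sum_le_sum fun j hj ↦ le_min_of_abs_succ_sub_le_one hf h0 hm (mem_range.1 hj).le
  have hsq : 4 * ((∑ j ∈ range m, min j (m - j) : ℕ) : ℤ) ≤ m ^ 2 := by
    exact_mod_cast four_mul_sum_range_min_le_sq m
  rw [sum_range_add_succ_eq_two_mul_sum h0 hm]
  linarith

end LipschitzSequence

lemma two_mul_area2_le {s : ℕ} {x : List (MStep s)} (hx : isMotzkin x) {m k : ℕ}
    (hlen : m + k = x.length) (h0 : height x m = 0) :
    2 * area2 x ≤ m ^ 2 + k ^ 2 := by
  have hk : height x (m + k) = 0 := by rw [hlen, height_length_of_isMotzkin hx]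
  have hleft := two_mul_sum_range_le_sq (abs_height_succ_sub_le_one x) (height_zero x) h0
  have hright := two_mul_sum_range_le_sq (f := fun i ↦ height x (m + i))
    (fun i ↦ abs_height_succ_sub_le_one x (m + i)) (by simpa using h0) hk
  rw [area2, ← hlen, sum_range_add]
  simp only [← add_assoc] at hright
  linarith

/-- If a Motzkin path of length 2n (n > 1) has an up step at height zero in
position n, or a down step ending at height zero in position n+1, then its
area is strictly less than n²/2 + 2n. -/
theorem stmt3 (s n : ℕ) (hn : 1 < n) (x : List (MStep s))
    (hx : isMotzkin x) (hlen : x.length = 2 * n)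
    (hB : (∃ c, x[n - 1]? = some (MStep.up c) ∧ height x (n - 1) = 0) ∨
          (∃ c, x[n]? = some (MStep.down c) ∧ height x (n + 1) = 0)) :
    area x < (n : ℚ) ^ 2 / 2 + 2 * n := by
  obtain ⟨p, rfl⟩ : ∃ p, n = p + 1 := ⟨n - 1, by omega⟩
  obtain ⟨m, k, hmk, h0, hsq⟩ : ∃ m k : ℕ, m + k = x.length ∧ height x m = 0 ∧
      (m ^ 2 + k ^ 2 : ℤ) = 2 * (p + 1) ^ 2 + 2 := by
    rcases hB with ⟨-, -, h0⟩ | ⟨-, -, h0⟩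
    · exact ⟨p, p + 2, by omega, h0, by push_cast; ring⟩
    · exact ⟨p + 2, p, by omega, h0, by push_cast; ring⟩
  have hbound : (2 * area2 x : ℚ) ≤ 2 * (p + 1) ^ 2 + 2 := by
    exact_mod_cast hsq ▸ two_mul_area2_le hx hmk h0
  have hp : (0 : ℚ) ≤ p := p.cast_nonneg
  rw [area]
  push_cast
  linarith
end

section
/- The partition function satisfies p(a) <= exp(pi * sqrt(2a/3)) for all a >= 1. -/
/-!
For `0 ≤ x < 1`, `p(n) xⁿ` is one term of the expansion of the truncated Euler product
`∏_{k ≤ n} (1 + x^k + x^{2k} + ⋯) ≤ ∏_{k ≤ n} (1 - x^k)⁻¹`, whose logarithm is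
`∑_j (1/j) ∑_k x^{jk}`. For `x = e^{-t}` the inner sum is at most `1/(e^{jt} - 1) ≤ 1/(jt)`, so the
logarithm is at most `∑_j 1/(j² t) = π²/(6t)` and `p(n) ≤ exp(nt + π²/(6t))`. The choice
`t = π/√(6n)` makes the exponent `π √(2n/3)`.
-/

open Finset Real

namespace Nat.Partition

variable {n : ℕ}

lemma mem_Icc_of_mem_parts {p : n.Partition} {k : ℕ} (hk : k ∈ p.parts) : k ∈ Icc 1 n :=
  mem_Icc.2 ⟨p.parts_pos hk, le_of_mem_parts hk⟩

lemma count_parts_le (p : n.Partition) (k : ℕ) : p.parts.count k ≤ n :=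
  calc p.parts.count k ≤ Multiset.card p.parts := Multiset.count_le_card _ _
    _ = Multiset.card p.parts • 1 := by rw [smul_eq_mul, mul_one]
    _ ≤ p.parts.sum := Multiset.card_nsmul_le_sum fun _ hk => p.parts_pos hk
    _ = n := p.parts_sum

lemma sum_Icc_count_mul (p : n.Partition) : ∑ k ∈ Icc 1 n, p.parts.count k * k = n := by
  conv_rhs => rw [← p.parts_sum, Finset.sum_multiset_count_of_subset p.parts (Icc 1 n)
    fun _ hk => mem_Icc_of_mem_parts (Multiset.mem_toFinset.1 hk)]
  rfl

lemma ext_of_count_eq {p q : n.Partition}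
    (h : ∀ k ∈ Icc 1 n, p.parts.count k = q.parts.count k) : p = q := by
  ext1
  ext k
  by_cases hk : k ∈ Icc 1 n
  · exact h k hk
  · rw [Multiset.count_eq_zero_of_notMem fun hp => hk (mem_Icc_of_mem_parts hp),
      Multiset.count_eq_zero_of_notMem fun hq => hk (mem_Icc_of_mem_parts hq)]

lemma card_mul_pow_le_prod {x : ℝ} (hx0 : 0 ≤ x) (hx1 : x < 1) :
    (Fintype.card n.Partition : ℝ) * x ^ n ≤ ∏ k ∈ Icc 1 n, (1 - x ^ k)⁻¹ := by
  classical
  let mult : n.Partition → Icc 1 n → ℕ := fun p k => p.parts.count (k : ℕ)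
  have hinj : Function.Injective mult := fun p q h =>
    ext_of_count_eq fun k hk => congrFun h ⟨k, hk⟩
  have hmem : ∀ p, mult p ∈ Fintype.piFinset fun _ => range (n + 1) := fun p =>
    Fintype.mem_piFinset.2 fun k => mem_range_succ_iff.2 (count_parts_le p k)
  have hweight : ∀ p, x ^ n = ∏ k : Icc 1 n, (x ^ (k : ℕ)) ^ mult p k := fun p => by
    simp_rw [← pow_mul, mul_comm _ (mult p _), prod_pow_eq_pow_sum, mult]
    rw [Finset.sum_coe_sort (Icc 1 n) fun k => p.parts.count k * k, sum_Icc_count_mul]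
  calc (Fintype.card n.Partition : ℝ) * x ^ n
      = ∑ p : n.Partition, ∏ k : Icc 1 n, (x ^ (k : ℕ)) ^ mult p k := by
        rw [← Finset.card_univ, ← nsmul_eq_mul, ← sum_const]
        exact sum_congr rfl fun p _ => hweight p
    _ = ∑ f ∈ univ.image mult, ∏ k : Icc 1 n, (x ^ (k : ℕ)) ^ f k :=
        (sum_image (f := fun f => ∏ k : Icc 1 n, (x ^ (k : ℕ)) ^ f k)
          fun p _ q _ h => hinj h).symm
    _ ≤ ∑ f ∈ Fintype.piFinset fun _ => range (n + 1), ∏ k : Icc 1 n, (x ^ (k : ℕ)) ^ f k :=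
        sum_le_sum_of_subset_of_nonneg (image_subset_iff.2 fun p _ => hmem p)
          fun _ _ _ => by positivity
    _ = ∏ k : Icc 1 n, ∑ c ∈ range (n + 1), (x ^ (k : ℕ)) ^ c := (prod_univ_sum _ _).symm
    _ ≤ ∏ k : Icc 1 n, (1 - x ^ (k : ℕ))⁻¹ := by
        gcongr with k
        simpa using geom_sum_Ico_le_of_lt_one (m := 0) (by positivity)
          (pow_lt_one₀ hx0 hx1 (Nat.one_le_iff_ne_zero.1 (mem_Icc.1 k.2).1))
    _ = ∏ k ∈ Icc 1 n, (1 - x ^ k)⁻¹ := prod_coe_sort (Icc 1 n) fun k => (1 - x ^ k)⁻¹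

end Nat.Partition

lemma exp_neg_lt_one {u : ℝ} (hu : 0 < u) : exp (-u) < 1 :=
  exp_lt_one_iff.2 (neg_lt_zero.2 hu)

lemma exp_neg_div_one_sub_exp_neg_le {u : ℝ} (hu : 0 < u) :
    exp (-u) / (1 - exp (-u)) ≤ 1 / u := by
  rw [div_le_div_iff₀ (sub_pos.2 (exp_neg_lt_one hu)) hu]
  nlinarith [add_one_le_exp u, exp_pos (-u), exp_neg u, inv_mul_cancel₀ (exp_pos u).ne']

lemma sum_Icc_exp_neg_pow_le (n : ℕ) {u : ℝ} (hu : 0 < u) :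
    ∑ k ∈ Icc 1 n, exp (-u) ^ k ≤ 1 / u := by
  rw [← Finset.Ico_add_one_right_eq_Icc]
  calc ∑ k ∈ Ico 1 (n + 1), exp (-u) ^ k ≤ exp (-u) ^ 1 / (1 - exp (-u)) :=
        geom_sum_Ico_le_of_lt_one (exp_pos _).le (exp_neg_lt_one hu)
    _ ≤ 1 / u := by rw [pow_one]; exact exp_neg_div_one_sub_exp_neg_le hu

lemma hasSum_one_div_add_one_sq : HasSum (fun j : ℕ => 1 / ((j : ℝ) + 1) ^ 2) (π ^ 2 / 6) := by
  simpa using (hasSum_nat_add_iff' 1).2 hasSum_zeta_two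

lemma sum_Icc_neg_log_one_sub_exp_neg_pow_le (n : ℕ) {t : ℝ} (ht : 0 < t) :
    ∑ k ∈ Icc 1 n, -log (1 - exp (-t) ^ k) ≤ π ^ 2 / (6 * t) := by
  have hlog : ∀ k ∈ Icc 1 n, HasSum (fun j : ℕ => (exp (-t) ^ k) ^ (j + 1) / (j + 1))
      (-log (1 - exp (-t) ^ k)) := fun k hk => by
    refine hasSum_pow_div_log_of_abs_lt_one ?_
    rw [abs_of_pos (by positivity)]
    exact pow_lt_one₀ (exp_pos _).le (exp_neg_lt_one ht)
      (Nat.one_le_iff_ne_zero.1 (mem_Icc.1 hk).1)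
  have hterm : ∀ j : ℕ, ∑ k ∈ Icc 1 n, (exp (-t) ^ k) ^ (j + 1) / (j + 1)
      ≤ 1 / t * (1 / ((j : ℝ) + 1) ^ 2) := fun j => by
    have hj : (0 : ℝ) < j + 1 := by positivity
    calc ∑ k ∈ Icc 1 n, (exp (-t) ^ k) ^ (j + 1) / (j + 1)
        = (∑ k ∈ Icc 1 n, exp (-((j + 1) * t)) ^ k) / (j + 1) := by
          rw [sum_div]
          refine sum_congr rfl fun k _ => ?_
          rw [← pow_mul, mul_comm k, pow_mul, ← exp_nat_mul]
          push_cast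
          ring_nf
      _ ≤ 1 / ((j + 1) * t) / (j + 1) := by
          gcongr
          exact sum_Icc_exp_neg_pow_le n (by positivity)
      _ = 1 / t * (1 / ((j : ℝ) + 1) ^ 2) := by field_simp
  calc ∑ k ∈ Icc 1 n, -log (1 - exp (-t) ^ k)
      ≤ 1 / t * (π ^ 2 / 6) :=
        hasSum_le hterm (hasSum_sum hlog) (hasSum_one_div_add_one_sq.mul_left _)
    _ = π ^ 2 / (6 * t) := by field_simp

lemma prod_Icc_inv_one_sub_exp_neg_pow_le (n : ℕ) {t : ℝ} (ht : 0 < t) :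
    ∏ k ∈ Icc 1 n, (1 - exp (-t) ^ k)⁻¹ ≤ exp (π ^ 2 / (6 * t)) := by
  have hpos : ∀ k ∈ Icc 1 n, 0 < 1 - exp (-t) ^ k := fun k hk =>
    sub_pos.2 (pow_lt_one₀ (exp_pos _).le (exp_neg_lt_one ht)
      (Nat.one_le_iff_ne_zero.1 (mem_Icc.1 hk).1))
  calc ∏ k ∈ Icc 1 n, (1 - exp (-t) ^ k)⁻¹ = exp (∑ k ∈ Icc 1 n, -log (1 - exp (-t) ^ k)) := by
        rw [exp_sum]
        exact prod_congr rfl fun k hk => by rw [exp_neg (log _), exp_log (hpos k hk)]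
    _ ≤ exp (π ^ 2 / (6 * t)) := exp_le_exp.2 (sum_Icc_neg_log_one_sub_exp_neg_pow_le n ht)

lemma card_partition_le_exp (n : ℕ) {t : ℝ} (ht : 0 < t) :
    (Fintype.card n.Partition : ℝ) ≤ exp (n * t + π ^ 2 / (6 * t)) := by
  have hx : exp (-t) ^ n * exp (n * t) = 1 := by
    rw [← exp_nat_mul, ← exp_add]
    simp
  calc (Fintype.card n.Partition : ℝ)
      = Fintype.card n.Partition * exp (-t) ^ n * exp (n * t) := by rw [mul_assoc, hx, mul_one]
    _ ≤ exp (π ^ 2 / (6 * t)) * exp (n * t) := by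
        gcongr
        exact (Nat.Partition.card_mul_pow_le_prod (exp_pos _).le (exp_neg_lt_one ht)).trans
          (prod_Icc_inv_one_sub_exp_neg_pow_le n ht)
    _ = exp (n * t + π ^ 2 / (6 * t)) := by rw [← exp_add, add_comm]

/-- The partition function satisfies p(a) ≤ exp(π √(2a/3)) for all a ≥ 1. -/
theorem stmt8 (a : ℕ) (ha : 1 ≤ a) :
    (Fintype.card (Nat.Partition a) : ℝ) ≤ Real.exp (Real.pi * Real.sqrt (2 * a / 3)) := by
  set s := √(2 * a / 3)
  have ha' : (0 : ℝ) < a := by exact_mod_cast ha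
  have hs0 : 0 < s := sqrt_pos.2 (by positivity)
  have hs2 : s ^ 2 = 2 * a / 3 := sq_sqrt (by positivity)
  convert card_partition_le_exp a (t := π / (3 * s)) (by positivity) using 2
  field_simp
  linear_combination 9 * hs2
end

section
/- Let s >= 2, and consider s-colored Motzkin paths of length 2n with local moves: swapping a flat step with an adjacent up or down step (0u^k <-> u^k 0, 0d^k <-> d^k 0), and replacing two adjacent flat steps by a same-colored peak (00 <-> u^k d^k). Any sequence of local moves transforming a prime path whose first-step color is i into a prime path whose first-step color is j != i must pass through a path in B, where B is the set of paths having an up step at height zero in position n or a down step reaching height zero in position n+1. -/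
/-- The area-increasing local moves on two adjacent steps:
`0uᵏ → uᵏ0`, `dᵏ0 → 0dᵏ`, and `00 → uᵏdᵏ`. -/
inductive IncPair (s : ℕ) : List (MStep s) → List (MStep s) → Prop
  | upFlat (c : Fin s) : IncPair s [MStep.flat, MStep.up c] [MStep.up c, MStep.flat]
  | downFlat (c : Fin s) : IncPair s [MStep.down c, MStep.flat] [MStep.flat, MStep.down c]
  | peak (c : Fin s) : IncPair s [MStep.flat, MStep.flat] [MStep.up c, MStep.down c]

/-- A local move: replace two adjacent steps according to one of the moves
`0uᵏ ↔ uᵏ0`, `0dᵏ ↔ dᵏ0`, `00 ↔ uᵏdᵏ`. -/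
def LocalMove {s : ℕ} (x y : List (MStep s)) : Prop :=
  ∃ a b p q, (IncPair s p q ∨ IncPair s q p) ∧ x = a ++ p ++ b ∧ y = a ++ q ++ b

/-- The bottleneck: paths with an up step at height zero in position n, or a
down step reaching height zero in position n+1. -/
def bottleneck (s n : ℕ) : Set (List (MStep s)) :=
  {x | (∃ c, x[n - 1]? = some (MStep.up c) ∧ height x (n - 1) = 0) ∨
       (∃ c, x[n]? = some (MStep.down c) ∧ height x (n + 1) = 0)}

/-!
Read a Motzkin path with a stack holding the colors of its unmatched up steps. At time `n` the
bottom of the stack is the color of the up step that opens the excursion containing step `n`; for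
a prime path of length `2n` this is the color of its first step. A local move away from positions
`n, n+1` does not change the stack at time `n` at all, and a move across them changes only its top
entry, so the bottom is preserved unless the stack at time `n` has at most one entry and that entry
is created or destroyed by the move, which is exactly what membership in the bottleneck records.
-/

section

variable {s : ℕ}

def MStep.push : List (Fin s) → MStep s → List (Fin s)
  | st, .up c => c :: st
  | st, .flat => st
  | st, .down _ => st.tail

/-- The stack of colors of the unmatched up steps after reading `x` from the stack `st`,
most recent first. -/
def openUps (st : List (Fin s)) (x : List (MStep s)) : List (Fin s) :=
  x.foldl MStep.push st

/-- The color of the up step opening the excursion that contains step `n` (`none` if the path is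
at height `0` at time `n`). -/
def baseColor (n : ℕ) (x : List (MStep s)) : Option (Fin s) :=
  (openUps [] (x.take n)).getLast?

@[simp] lemma openUps_nil (st : List (Fin s)) : openUps st [] = st := rfl

@[simp] lemma openUps_cons (st : List (Fin s)) (a : MStep s) (x : List (MStep s)) :
    openUps st (a :: x) = openUps (MStep.push st a) x := rfl

lemma openUps_append (st : List (Fin s)) (x y : List (MStep s)) :
    openUps st (x ++ y) = openUps (openUps st x) y :=
  List.foldl_append

lemma isMotzkinAux_of_append {st : List (Fin s)} {a l : List (MStep s)}
    (h : isMotzkinAux st (a ++ l)) : isMotzkinAux (openUps st a) l := by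
  induction a generalizing st with
  | nil => exact h
  | cons x a ih =>
    cases x with
    | up c => exact ih h
    | flat => exact ih h
    | down c =>
      cases st with
      | nil => exact h.elim
      | cons d st => exact ih h.2

lemma length_openUps_of_isMotzkinAux_append {st : List (Fin s)} {a l : List (MStep s)}
    (h : isMotzkinAux st (a ++ l)) :
    ((openUps st a).length : ℤ) = st.length + (a.map MStep.h).sum := by
  induction a generalizing st with
  | nil => simp
  | cons x a ih =>
    cases x with
    | up c =>
      simp only [openUps_cons, MStep.push, ih h, List.length_cons, Nat.cast_add, Nat.cast_one,
        List.map_cons, MStep.h, List.sum_cons]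
      ring
    | flat => simp [ih h, MStep.push, MStep.h]
    | down c =>
      cases st with
      | nil => exact h.elim
      | cons d st => simp [ih h.2, MStep.push, MStep.h]

lemma height_eq_length_openUps {x : List (MStep s)} (hx : isMotzkin x) (j : ℕ) :
    height x j = (openUps [] (x.take j)).length := by
  rw [← List.take_append_drop j x] at hx
  simpa [height] using (length_openUps_of_isMotzkinAux_append hx).symm

lemma isMotzkinAux_append_incPair_iff {p q : List (MStep s)} (hpq : IncPair s p q)
    (st : List (Fin s)) (b : List (MStep s)) :
    isMotzkinAux st (p ++ b) ↔ isMotzkinAux st (q ++ b) := by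
  cases hpq <;> cases st <;> simp [isMotzkinAux]

lemma isMotzkinAux_incPair_iff {p q : List (MStep s)} (hpq : IncPair s p q)
    (a b : List (MStep s)) (st : List (Fin s)) :
    isMotzkinAux st (a ++ p ++ b) ↔ isMotzkinAux st (a ++ q ++ b) := by
  induction a generalizing st with
  | nil => exact isMotzkinAux_append_incPair_iff hpq st b
  | cons x a ih =>
    cases x with
    | up c => exact ih (c :: st)
    | flat => exact ih st
    | down c =>
      cases st with
      | nil => exact Iff.rfl
      | cons d st => exact and_congr_right fun _ => ih st

lemma LocalMove.isMotzkin_iff {x y : List (MStep s)} (h : LocalMove x y) :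
    isMotzkin x ↔ isMotzkin y := by
  obtain ⟨a, b, p, q, hpq | hqp, rfl, rfl⟩ := h
  · exact isMotzkinAux_incPair_iff hpq a b []
  · exact (isMotzkinAux_incPair_iff hqp a b []).symm

lemma getLast?_push {st : List (Fin s)} {a : MStep s} (hst : st ≠ []) (h : MStep.push st a ≠ []) :
    (MStep.push st a).getLast? = st.getLast? := by
  obtain ⟨d, st, rfl⟩ := List.exists_cons_of_ne_nil hst
  cases a with
  | up c => exact List.getLast?_cons_cons
  | flat => rfl
  | down c =>
    obtain ⟨e, st, rfl⟩ := List.exists_cons_of_ne_nil h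
    exact List.getLast?_cons_cons.symm

lemma getLast?_openUps (x : List (MStep s)) {st : List (Fin s)} (hst : st ≠ [])
    (h : ∀ j, openUps st (x.take j) ≠ []) : (openUps st x).getLast? = st.getLast? := by
  induction x generalizing st with
  | nil => rfl
  | cons a x ih =>
    have hpush : MStep.push st a ≠ [] := h 1
    rw [openUps_cons, ih hpush (fun j => h (j + 1)), getLast?_push hst hpush]

lemma baseColor_of_prime {n : ℕ} {x : List (MStep s)} {i : Fin s} (hx : isMotzkin x)
    (hlen : x.length = 2 * n) (hpos : ∀ q, 0 < q → q < 2 * n → 0 < height x q)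
    (hhead : x.head? = some (MStep.up i)) : baseColor n x = some i := by
  obtain ⟨r, rfl⟩ : ∃ r, x = MStep.up i :: r := by
    cases x <;> simp_all
  obtain ⟨n, rfl⟩ : ∃ m, n = m + 1 := Nat.exists_eq_succ_of_ne_zero (by simp at hlen; omega)
  have hne : ∀ j, openUps [i] ((r.take n).take j) ≠ [] := by
    intro j hj
    have hq := hpos (min j n + 1) (by omega) (by omega)
    rw [height_eq_length_openUps hx, List.take_succ_cons, openUps_cons, ← List.take_take] at hq
    simp [MStep.push, hj] at hq
  exact getLast?_openUps _ (List.cons_ne_nil _ _) hne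

lemma openUps_take_incPair {p q : List (MStep s)} (hpq : IncPair s p q) {m : ℕ} (hm : m ≠ 1)
    (st : List (Fin s)) : openUps st (p.take m) = openUps st (q.take m) := by
  rcases Nat.lt_or_ge m 1 with h | h
  · obtain rfl : m = 0 := by omega
    rfl
  · obtain ⟨m, rfl⟩ : ∃ m', m = m' + 2 := ⟨m - 2, by omega⟩
    cases hpq <;> simp [MStep.push]

lemma openUps_take_append_incPair {p q : List (MStep s)} (hpq : IncPair s p q)
    (a b : List (MStep s)) {n : ℕ} (hn : n ≠ a.length + 1) (st : List (Fin s)) :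
    openUps st ((a ++ p ++ b).take n) = openUps st ((a ++ q ++ b).take n) := by
  have hlen : p.length = q.length := by cases hpq <;> rfl
  simp only [List.append_assoc, List.take_append, openUps_append, hlen]
  rw [openUps_take_incPair hpq (by omega)]

lemma baseColor_incPair_eq_or_mem_bottleneck_of_straddle {a b p q : List (MStep s)}
    (hpq : IncPair s p q) (hx : isMotzkin (a ++ p ++ b)) :
    baseColor (a.length + 1) (a ++ p ++ b) = baseColor (a.length + 1) (a ++ q ++ b) ∨
      a ++ q ++ b ∈ bottleneck s (a.length + 1) := by
  have hy : isMotzkin (a ++ q ++ b) := (isMotzkinAux_incPair_iff hpq a b []).mp hx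
  have hprefix := isMotzkinAux_of_append (List.append_assoc a p b ▸ hx)
  simp only [bottleneck, baseColor, Set.mem_ofPred_eq, height_eq_length_openUps hy]
  simp only [Nat.add_assoc, List.append_assoc, List.take_length_add_append, Nat.add_sub_cancel]
  cases hpq with
  | upFlat c | peak c =>
    rcases hS : openUps [] a with _ | ⟨d, S⟩
    · right; left
      exact ⟨c, by simp, by simp [hS]⟩
    · left
      simp [openUps_append, hS, MStep.push, List.getLast?_cons_cons]
  | downFlat c =>
    rcases hS : openUps [] a with _ | ⟨d, _ | ⟨e, S⟩⟩
    · rw [hS] at hprefix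
      exact hprefix.elim
    · right; right
      exact ⟨c, by simp, by simp [openUps_append, hS, MStep.push]⟩
    · left
      simp [openUps_append, hS, MStep.push, List.getLast?_cons_cons]

lemma baseColor_incPair_eq_or_mem_bottleneck (n : ℕ) {a b p q : List (MStep s)}
    (hpq : IncPair s p q) (hx : isMotzkin (a ++ p ++ b)) :
    baseColor n (a ++ p ++ b) = baseColor n (a ++ q ++ b) ∨ a ++ q ++ b ∈ bottleneck s n := by
  by_cases hn : n = a.length + 1
  · exact hn ▸ baseColor_incPair_eq_or_mem_bottleneck_of_straddle hpq hx
  · exact .inl (congrArg List.getLast? (openUps_take_append_incPair hpq a b hn []))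

lemma LocalMove.baseColor_eq {n : ℕ} {x y : List (MStep s)} (h : LocalMove x y)
    (hx : isMotzkin x) (hxB : x ∉ bottleneck s n) (hyB : y ∉ bottleneck s n) :
    baseColor n x = baseColor n y := by
  have hy := h.isMotzkin_iff.mp hx
  obtain ⟨a, b, p, q, hpq | hqp, rfl, rfl⟩ := h
  · exact (baseColor_incPair_eq_or_mem_bottleneck n hpq hx).resolve_right hyB
  · exact ((baseColor_incPair_eq_or_mem_bottleneck n hqp hy).resolve_right hxB).symm

end

/-- Any sequence of local moves from a prime path of length 2n whose first
step has color i to a prime path whose first step has color j ≠ i must pass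
through the bottleneck B. -/
theorem stmt15 (s n : ℕ) (w : ℕ → List (MStep s)) (k : ℕ)
    (hmoves : ∀ m < k, LocalMove (w m) (w (m + 1)))
    (i j : Fin s) (hij : i ≠ j)
    (h0 : isMotzkin (w 0) ∧ (w 0).length = 2 * n ∧
      (∀ q, 0 < q → q < 2 * n → 0 < height (w 0) q) ∧
      (w 0).head? = some (MStep.up i))
    (hk : isMotzkin (w k) ∧ (w k).length = 2 * n ∧
      (∀ q, 0 < q → q < 2 * n → 0 < height (w k) q) ∧
      (w k).head? = some (MStep.up j)) :
    ∃ m ≤ k, w m ∈ bottleneck s n := by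
  obtain ⟨h0m, h0len, h0pos, h0head⟩ := h0
  obtain ⟨hkm, hklen, hkpos, hkhead⟩ := hk
  by_contra! hB
  have hinv : ∀ m ≤ k, isMotzkin (w m) ∧ baseColor n (w m) = some i := by
    intro m hm
    induction m with
    | zero => exact ⟨h0m, baseColor_of_prime h0m h0len h0pos h0head⟩
    | succ m ih =>
      obtain ⟨hmot, hbase⟩ := ih (by omega)
      have hmove := hmoves m (by omega)
      exact ⟨hmove.isMotzkin_iff.mp hmot,
        hmove.baseColor_eq hmot (hB m (by omega)) (hB (m + 1) hm) ▸ hbase⟩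
  have hj := baseColor_of_prime hkm hklen hkpos hkhead
  exact hij (Option.some_injective _ ((hinv k le_rfl).2.symm.trans hj))
end

section
/- Any two s-colored Motzkin paths of length 2n are connected by a finite sequence of local moves (0u^k <-> u^k 0, 0d^k <-> d^k 0, 00 <-> u^k d^k). In particular, every s-colored Motzkin path can be reduced to the all-flat path 00...0 by local moves. -/
/-! Reading a path from the right while remembering the colors of its pending up steps, every
suffix reduces to flat steps followed by the pending down steps. An up step in front of such a
normal form slides across the flats to meet its matching down step, and the resulting peak is
flattened. -/

section

variable {s : ℕ}

theorem IncPair.length_eq {p q : List (MStep s)} (h : IncPair s p q) : p.length = q.length := by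
  cases h <;> rfl

namespace LocalMove

instance : Std.Symm (LocalMove (s := s)) where
  symm _ _ := fun ⟨a, b, p, q, hpq, hx, hy⟩ => ⟨a, b, q, p, hpq.symm, hy, hx⟩

theorem of_incPair {p q : List (MStep s)} (h : IncPair s p q) (b : List (MStep s)) :
    LocalMove (p ++ b) (q ++ b) :=
  ⟨[], b, p, q, .inl h, rfl, rfl⟩

theorem append_left (a : List (MStep s)) {x y : List (MStep s)} (h : LocalMove x y) :
    LocalMove (a ++ x) (a ++ y) := by
  obtain ⟨a', b, p, q, hpq, rfl, rfl⟩ := h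
  exact ⟨a ++ a', b, p, q, hpq, by simp, by simp⟩

theorem length_eq {x y : List (MStep s)} (h : LocalMove x y) : x.length = y.length := by
  obtain ⟨a, b, p, q, hpq | hqp, rfl, rfl⟩ := h
  · simp [hpq.length_eq]
  · simp [hqp.length_eq]

theorem cons_flat {t : MStep s} (ht : t ≠ .flat) (r : List (MStep s)) :
    LocalMove (t :: .flat :: r) (.flat :: t :: r) := by
  cases t with
  | up c => exact symm (of_incPair (.upFlat c) r)
  | flat => exact absurd rfl ht
  | down c => exact of_incPair (.downFlat c) r

end LocalMove

theorem reflTransGen_localMove_append_left (a : List (MStep s)) {x y : List (MStep s)}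
    (h : Relation.ReflTransGen LocalMove x y) :
    Relation.ReflTransGen LocalMove (a ++ x) (a ++ y) :=
  Relation.ReflTransGen.lift (a ++ ·) (fun _ _ => LocalMove.append_left a) _ _ h

theorem reflTransGen_localMove_length_eq {x y : List (MStep s)}
    (h : Relation.ReflTransGen LocalMove x y) : x.length = y.length := by
  induction h with
  | refl => rfl
  | tail _ hyz ih => exact ih.trans hyz.length_eq

theorem reflTransGen_localMove_cons_replicate_flat {t : MStep s} (ht : t ≠ .flat) (k : ℕ)
    (r : List (MStep s)) :
    Relation.ReflTransGen LocalMove (t :: (List.replicate k .flat ++ r))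
      (List.replicate k .flat ++ t :: r) := by
  induction k with
  | zero => exact .refl
  | succ k ih =>
    exact .head (LocalMove.cons_flat ht _) (reflTransGen_localMove_append_left [.flat] ih)

theorem exists_reflTransGen_localMove_flats_append_downs {st : List (Fin s)}
    {x : List (MStep s)} (h : isMotzkinAux st x) :
    ∃ k, Relation.ReflTransGen LocalMove x (List.replicate k .flat ++ st.map .down) := by
  induction x generalizing st with
  | nil => exact ⟨0, by cases (h : st = []); exact .refl⟩
  | cons t r ih =>
    cases t with
    | flat =>
      obtain ⟨k, hk⟩ := ih h
      exact ⟨k + 1, reflTransGen_localMove_append_left [.flat] hk⟩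
    | down c' =>
      obtain _ | ⟨c, st⟩ := st
      · exact h.elim
      obtain ⟨rfl, hr⟩ := h
      obtain ⟨k, hk⟩ := ih hr
      exact ⟨k, (reflTransGen_localMove_append_left [.down c] hk).trans
        (reflTransGen_localMove_cons_replicate_flat (by simp) k _)⟩
    | up c =>
      obtain ⟨k, hk⟩ := ih (h : isMotzkinAux (c :: st) r)
      have peak : LocalMove (List.replicate k .flat ++ .up c :: .down c :: st.map .down)
          (List.replicate (k + 2) .flat ++ st.map .down) := by
        have := symm ((LocalMove.of_incPair (.peak c) (st.map .down)).append_left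
          (List.replicate k .flat))
        simpa [List.replicate_add] using this
      exact ⟨k + 2, ((reflTransGen_localMove_append_left [.up c] hk).trans
        (reflTransGen_localMove_cons_replicate_flat (by simp) k _)).tail peak⟩

theorem reflTransGen_localMove_replicate_flat {x : List (MStep s)} (hx : isMotzkin x) :
    Relation.ReflTransGen LocalMove x (List.replicate x.length .flat) := by
  obtain ⟨k, hk⟩ := exists_reflTransGen_localMove_flats_append_downs hx
  simp only [List.map_nil, List.append_nil] at hk
  simpa [reflTransGen_localMove_length_eq hk] using hk

end

/-- Any two s-colored Motzkin paths of length 2n are connected by a finite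
sequence of local moves; in particular every such path can be reduced to the
all-flat path. -/
theorem stmt16 (s n : ℕ) (x y : List (MStep s))
    (hx : isMotzkin x) (hxlen : x.length = 2 * n)
    (hy : isMotzkin y) (hylen : y.length = 2 * n) :
    Relation.ReflTransGen LocalMove x y ∧
    Relation.ReflTransGen LocalMove x (List.replicate (2 * n) MStep.flat) := by
  have hxflat := reflTransGen_localMove_replicate_flat hx
  have hyflat := reflTransGen_localMove_replicate_flat hy
  rw [hxlen] at hxflat
  rw [hylen] at hyflat
  exact ⟨hxflat.trans (symm hyflat), hxflat⟩
end

section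
/- Let P be a reversible irreducible Markov chain with stationary distribution pi on a finite set Omega, and suppose there exist disjoint sets S, S', B in Omega and an involution x -> x' on Omega preserving pi, mapping S to S' and B to B, such that every path of positive-probability transitions from S to S' passes through B. Let A be the set of states reachable from S without entering B. Then pi(A) <= 1/2 and 1 - lambda_2(P) <= 2*pi(B)/pi(S). -/
/-!
If `x ∈ A` and `σ x ∈ A`, a `B`-avoiding path from `S` to `x`, followed by the `σ`-image of a
`B`-avoiding path from `S` to `σ x` run backwards (reversibility makes reversed steps legal), goes
from `S` to `S'` without meeting `B`, which is excluded. So `A` and `σ(A)` are disjoint, and since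
they have the same mass, `π(A) ≤ 1/2`.

Steps leaving `A` or `σ(A)` can only enter `B`, so `g = 𝟙_A - 𝟙_{σ(A)}`, which has `π`-mean
zero and squared `π`-norm `2π(A)`, has Dirichlet form at most `π(B)`. The symmetrisation
`D^{1/2} P D^{-1/2}`, `D = diag π`, is a symmetric matrix with the spectrum of `P`, and its
eigenvalue `1` has eigenspace spanned by `√π` (harmonic functions of an irreducible chain are
constant). Since `√π g` is orthogonal to `√π`, its Rayleigh quotient is bounded by an eigenvalue
`μ ≠ 1`, whence `(1 - λ₂) · 2π(A) ≤ π(B)`; finally `π(S) ≤ π(A)`.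
-/

open Matrix Module End WithLp Relation

namespace LinearMap

variable {𝕜 E : Type*} [RCLike 𝕜] [NormedAddCommGroup E] [InnerProductSpace 𝕜 E]
  [FiniteDimensional 𝕜 E] {T : E →ₗ[𝕜] E}

theorem re_inner_div_norm_sq_le_iSup (x : E) (hx : x ≠ 0) :
    RCLike.re (inner 𝕜 (T x) x) / ‖x‖ ^ 2 ≤
      ⨆ x : { x : E // x ≠ 0 }, RCLike.re (inner 𝕜 (T x) x) / ‖(x : E)‖ ^ 2 := by
  refine le_ciSup (f := fun y : { y : E // y ≠ 0 } => RCLike.re (inner 𝕜 (T y) y) / ‖(y : E)‖ ^ 2)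
    ⟨‖T.toContinuousLinearMap‖, ?_⟩ ⟨x, hx⟩
  rintro _ ⟨y, rfl⟩
  exact (le_abs_self _).trans (T.toContinuousLinearMap.rayleighQuotient_le_norm y)

theorem IsSymmetric.exists_hasEigenvalue_ne_re_inner_le (hT : T.IsSymmetric) (μ₀ : 𝕜) {v : E}
    (hv : v ∈ (eigenspace T μ₀)ᗮ) (hv0 : v ≠ 0) :
    ∃ μ : ℝ, HasEigenvalue T μ ∧ (μ : 𝕜) ≠ μ₀ ∧ RCLike.re (inner 𝕜 (T v) v) ≤ μ * ‖v‖ ^ 2 := by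
  set V := (eigenspace T μ₀)ᗮ
  have hV : ∀ x ∈ V, T x ∈ V := hT.invariant_orthogonalComplement_eigenspace μ₀
  let T' := T.restrict hV
  have : Nontrivial V := nontrivial_of_ne ⟨v, hv⟩ 0 (by simpa using hv0)
  have hT' := (hT.restrict_invariant hV).hasEigenvalue_iSup_of_finiteDimensional
  set μ := ⨆ x : { x : V // x ≠ 0 }, RCLike.re (inner 𝕜 (T' x) x) / ‖(x : V)‖ ^ 2
  obtain ⟨⟨w, hwV⟩, hw, hw0⟩ := hT'.exists_hasEigenvector
  have hTw : T w = (μ : 𝕜) • w := by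
    simpa [T'] using congrArg Subtype.val (mem_eigenspace_iff.mp hw)
  have hw0' : w ≠ 0 := by simpa using hw0
  refine ⟨μ, hasEigenvalue_of_hasEigenvector ⟨mem_eigenspace_iff.mpr hTw, hw0'⟩, ?_, ?_⟩
  · rintro hμ
    rw [hμ] at hTw
    exact hw0' (Submodule.inner_right_of_mem_orthogonal (mem_eigenspace_iff.mpr hTw) hwV
      |> inner_self_eq_zero.mp)
  · have hpos : 0 < ‖v‖ ^ 2 := by positivity
    have := T'.re_inner_div_norm_sq_le_iSup ⟨v, hv⟩ (by simpa using hv0)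
    rw [div_le_iff₀ (by simpa using hpos)] at this
    exact this

end LinearMap

theorem Relation.reflTransGen_iff_exists_seq {α : Type*} {r : α → α → Prop} {a b : α} :
    ReflTransGen r a b ↔
      ∃ (k : ℕ) (w : ℕ → α), w 0 = a ∧ w k = b ∧ ∀ i < k, r (w i) (w (i + 1)) := by
  constructor
  · intro h
    induction h with
    | refl => exact ⟨0, fun _ => a, rfl, rfl, by simp⟩
    | @tail b c _ hbc ih =>
      obtain ⟨k, w, hw0, hwk, hw⟩ := ih
      refine ⟨k + 1, fun i => if i ≤ k then w i else c, by simpa using hw0, by simp, ?_⟩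
      intro i hi
      rcases Nat.lt_or_ge i k with hik | hik
      · simpa [hik.le, Nat.succ_le_of_lt hik] using hw i hik
      · obtain rfl : i = k := by omega
        simpa [hwk] using hbc
  · rintro ⟨k, w, rfl, rfl, hw⟩
    induction k with
    | zero => rfl
    | succ k ih => exact (ih fun i hi => hw i (by omega)).tail (hw k k.lt_succ_self)

theorem disjoint_reach_image_reach {α : Type*} {R : α → α → Prop} [Std.Symm R]
    {σ : α → α} (hσR : ∀ x y, R x y → R (σ x) (σ y)) {S : Set α}
    (hS : ∀ s ∈ S, ∀ t ∈ S, ¬ ReflTransGen R s (σ t)) :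
    Disjoint {x | ∃ s ∈ S, ReflTransGen R s x} (σ '' {x | ∃ s ∈ S, ReflTransGen R s x}) := by
  refine Set.disjoint_left.mpr ?_
  rintro _ ⟨s, hs, hsx⟩ ⟨a, ⟨t, ht, hta⟩, rfl⟩
  exact hS s hs t ht (hsx.trans (Std.Symm.symm _ _ (hta.lift σ hσR)))

theorem indicator_sub_indicator_mul_sub_le {α : Type*} {A A' B : Set α} (hAA' : Disjoint A A')
    (hAB : Disjoint A B) (hA'B : Disjoint A' B) {x y : α}
    (hA : x ∈ A → y ∉ B → y ∈ A) (hA' : x ∈ A' → y ∉ B → y ∈ A') :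
    (A.indicator 1 x - A'.indicator 1 x) * ((A.indicator 1 x - A'.indicator 1 x) -
      (A.indicator 1 y - A'.indicator 1 y)) ≤ B.indicator (1 : α → ℝ) y := by
  rw [Set.disjoint_left] at hAA' hAB hA'B
  by_cases hy : y ∈ B <;> by_cases hxA : x ∈ A <;> by_cases hxA' : x ∈ A' <;>
    by_cases hyA : y ∈ A <;> by_cases hyA' : y ∈ A' <;> simp_all

theorem sum_indicator_image_of_involutive {α M : Type*} [Fintype α] [AddCommMonoid M]
    {σ : α → α} (hσ : Function.Involutive σ) {f : α → M} (hf : ∀ x, f (σ x) = f x) (A : Set α) :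
    ∑ x, (σ '' A).indicator f x = ∑ x, A.indicator f x := by
  rw [← Equiv.sum_comp (hσ.toPerm σ)]
  simp [Set.indicator_image hσ.injective, Function.comp_def, hf]

theorem sum_indicator_le_half {α : Type*} [Fintype α] {π : α → ℝ} (hπ : ∀ x, 0 ≤ π x)
    (hπ1 : ∑ x, π x = 1) {A A' : Set α} (hAA' : Disjoint A A')
    (hmass : ∑ x, A'.indicator π x = ∑ x, A.indicator π x) : ∑ x, A.indicator π x ≤ 1 / 2 := by
  have : ∑ x, (A ∪ A').indicator π x ≤ ∑ x, π x :=
    Finset.sum_le_sum fun x _ => Set.indicator_le_self' (fun x _ => hπ x) x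
  rw [Set.indicator_union_of_disjoint hAA', Finset.sum_add_distrib, hmass, hπ1] at this
  linarith

theorem le_two_mul_div_of_subset {α : Type*} [Fintype α] {π : α → ℝ} (hπ : ∀ x, 0 < π x)
    {A B S : Set α} (hSA : S ⊆ A) (hS : S.Nonempty) {c : ℝ}
    (hc : c * (2 * ∑ x, A.indicator π x) ≤ ∑ x, B.indicator π x) :
    c ≤ 2 * (∑ x, B.indicator π x) / ∑ x, S.indicator π x := by
  have hind (C : Set α) : 0 ≤ C.indicator π := Set.indicator_nonneg fun x _ => (hπ x).le
  obtain ⟨s, hs⟩ := hS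
  have hS : 0 < ∑ x, S.indicator π x :=
    Finset.sum_pos' (fun x _ => hind S x) ⟨s, Finset.mem_univ s, by simp [hs, hπ s]⟩
  have hSA' : ∑ x, S.indicator π x ≤ ∑ x, A.indicator π x := Finset.sum_le_sum fun x _ =>
    Set.indicator_le_indicator_of_subset hSA (fun x => (hπ x).le) x
  have hB : 0 ≤ ∑ x, B.indicator π x := Finset.sum_nonneg fun x _ => hind B x
  rw [le_div_iff₀ hS]
  nlinarith

section StepAvoiding

variable {Ω : Type*} {P : Matrix Ω Ω ℝ} {B : Set Ω}

def StepAvoiding (P : Matrix Ω Ω ℝ) (B : Set Ω) (x y : Ω) : Prop :=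
  0 < P x y ∧ x ∉ B ∧ y ∉ B

def reachAvoiding (P : Matrix Ω Ω ℝ) (B S : Set Ω) : Set Ω :=
  {x | ∃ s ∈ S, ReflTransGen (StepAvoiding P B) s x}

theorem reflTransGen_stepAvoiding_iff {s x : Ω} (hs : s ∉ B) :
    ReflTransGen (StepAvoiding P B) s x ↔ ∃ (k : ℕ) (w : ℕ → Ω), w 0 = s ∧ w k = x ∧
      (∀ i < k, 0 < P (w i) (w (i + 1))) ∧ ∀ i ≤ k, w i ∉ B := by
  rw [reflTransGen_iff_exists_seq]
  constructor
  · rintro ⟨k, w, hw0, hwk, hw⟩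
    refine ⟨k, w, hw0, hwk, fun i hi => (hw i hi).1, fun i hi => ?_⟩
    cases i with
    | zero => exact hw0 ▸ hs
    | succ i => exact (hw i (by omega)).2.2
  · rintro ⟨k, w, hw0, hwk, hpos, hB⟩
    exact ⟨k, w, hw0, hwk, fun i hi => ⟨hpos i hi, hB i hi.le, hB (i + 1) hi⟩⟩

theorem setOf_exists_seq_eq_reach {S : Set Ω} (hSB : Disjoint S B) :
    {x | ∃ (k : ℕ) (w : ℕ → Ω), w 0 ∈ S ∧ w k = x ∧
      (∀ i < k, 0 < P (w i) (w (i + 1))) ∧ ∀ i ≤ k, w i ∉ B} = reachAvoiding P B S := by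
  ext x
  constructor
  · rintro ⟨k, w, hw0, hwk, hpos, hB⟩
    exact ⟨w 0, hw0, (reflTransGen_stepAvoiding_iff (Set.disjoint_left.mp hSB hw0)).mpr
      ⟨k, w, rfl, hwk, hpos, hB⟩⟩
  · rintro ⟨s, hs, h⟩
    obtain ⟨k, w, rfl, hwk, hpos, hB⟩ :=
      (reflTransGen_stepAvoiding_iff (Set.disjoint_left.mp hSB hs)).mp h
    exact ⟨k, w, hs, hwk, hpos, hB⟩

theorem not_reflTransGen_stepAvoiding {S S' : Set Ω} (hSB : Disjoint S B)
    (hpass : ∀ (k : ℕ) (w : ℕ → Ω), w 0 ∈ S → w k ∈ S' →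
      (∀ i < k, 0 < P (w i) (w (i + 1))) → ∃ i ≤ k, w i ∈ B)
    {s t : Ω} (hs : s ∈ S) (ht : t ∈ S') : ¬ ReflTransGen (StepAvoiding P B) s t := fun h => by
  obtain ⟨k, w, rfl, rfl, hpos, hB⟩ :=
    (reflTransGen_stepAvoiding_iff (Set.disjoint_left.mp hSB hs)).mp h
  obtain ⟨i, hi, hiB⟩ := hpass k w hs ht hpos
  exact hB i hi hiB

theorem disjoint_reach_stepAvoiding {S : Set Ω} (hSB : Disjoint S B) :
    Disjoint (reachAvoiding P B S) B := by
  refine Set.disjoint_left.mpr ?_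
  rintro x ⟨s, hs, h⟩
  rcases h.cases_tail with rfl | ⟨_, -, hx⟩
  · exact Set.disjoint_left.mp hSB hs
  · exact hx.2.2

theorem mem_reach_stepAvoiding {S : Set Ω} (hSB : Disjoint S B) {x y : Ω} (hxy : 0 < P x y)
    (hx : x ∈ reachAvoiding P B S) (hy : y ∉ B) : y ∈ reachAvoiding P B S := by
  obtain ⟨s, hs, h⟩ := hx
  exact ⟨s, hs, h.tail ⟨hxy, Set.disjoint_left.mp (disjoint_reach_stepAvoiding hSB) ⟨s, hs, h⟩, hy⟩⟩

theorem stepAvoiding_symm {π : Ω → ℝ} (hπ : ∀ x, 0 < π x)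
    (hrev : ∀ x y, π x * P x y = π y * P y x) : Std.Symm (StepAvoiding P B) :=
  ⟨fun x y ⟨hxy, hx, hy⟩ =>
    ⟨pos_of_mul_pos_right (hrev x y ▸ mul_pos (hπ x) hxy) (hπ y).le, hy, hx⟩⟩

variable {σ : Ω → Ω}

theorem StepAvoiding.map (hPσ : ∀ x y, P (σ x) (σ y) = P x y) (hσB : ∀ x, σ x ∈ B ↔ x ∈ B)
    {x y : Ω} (h : StepAvoiding P B x y) :
    StepAvoiding P B (σ x) (σ y) := by
  simpa [StepAvoiding, hPσ, hσB] using h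

theorem image_closed_of_closed (hσ : Function.Involutive σ)
    (hPσ : ∀ x y, P (σ x) (σ y) = P x y) (hσB : ∀ x, σ x ∈ B ↔ x ∈ B) {A : Set Ω}
    (hA : ∀ x y, 0 < P x y → x ∈ A → y ∉ B → y ∈ A) :
    ∀ x y, 0 < P x y → x ∈ σ '' A → y ∉ B → y ∈ σ '' A := by
  rintro x y hxy ⟨a, ha, rfl⟩ hy
  exact ⟨σ y, hA a (σ y) (by rwa [← hPσ, hσ]) ha (by rwa [hσB]), hσ y⟩

end StepAvoiding

theorem inner_toLp_sqrt_mul {Ω : Type*} [Fintype Ω] {π : Ω → ℝ} (hπ : ∀ x, 0 ≤ π x) (a b : Ω → ℝ) :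
    inner ℝ (toLp 2 ((Real.sqrt ∘ π) * a)) (toLp 2 ((Real.sqrt ∘ π) * b)) =
      ∑ x, π x * a x * b x := by
  simp only [PiLp.inner_apply, Pi.mul_apply, Function.comp_apply, RCLike.inner_apply,
    conj_trivial]
  refine Finset.sum_congr rfl fun x _ => ?_
  linear_combination (a x * b x) * Real.mul_self_sqrt (hπ x)

section Markov

variable {Ω : Type*} [Fintype Ω] [DecidableEq Ω] {P : Matrix Ω Ω ℝ}

theorem le_one_of_mem_spectrum_of_mem_rowStochastic (hP : P ∈ rowStochastic ℝ Ω) {μ : ℝ}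
    (hμ : μ ∈ spectrum ℝ P) : μ ≤ 1 := by
  rw [← spectrum_toLin', ← hasEigenvalue_iff_mem_spectrum] at hμ
  obtain ⟨h, hh, hh0⟩ := hμ.exists_hasEigenvector
  rw [mem_eigenspace_iff, toLin'_apply] at hh
  obtain ⟨y, hy⟩ := Function.ne_iff.mp hh0
  obtain ⟨x, -, hx⟩ := Finset.univ.exists_max_image (fun y => |h y|) ⟨y, Finset.mem_univ y⟩
  have hpos : 0 < |h x| := (abs_pos.mpr hy).trans_le (hx y (Finset.mem_univ y))
  have : |μ| * |h x| ≤ 1 * |h x| := calc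
    |μ| * |h x| = |∑ y, P x y * h y| := by
      rw [← abs_mul, ← smul_eq_mul, ← Pi.smul_apply, ← hh]; rfl
    _ ≤ ∑ y, P x y * |h x| := by
      refine (Finset.abs_sum_le_sum_abs _ _).trans (Finset.sum_le_sum fun y _ => ?_)
      rw [abs_mul, abs_of_nonneg (nonneg_of_mem_rowStochastic hP)]
      exact mul_le_mul_of_nonneg_left (hx y (Finset.mem_univ y)) (nonneg_of_mem_rowStochastic hP)
    _ = 1 * |h x| := by rw [← Finset.sum_mul, sum_row_of_mem_rowStochastic hP]
  exact (le_abs_self μ).trans (le_of_mul_le_mul_right this hpos)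

theorem apply_eq_of_isMax_of_mulVec_eq_self (hP : P ∈ rowStochastic ℝ Ω) {h : Ω → ℝ}
    (hh : P *ᵥ h = h) {x z : Ω} (hx : ∀ y, h y ≤ h x) (hxz : 0 < P x z) : h z = h x := by
  have hsum : ∑ y, P x y * (h x - h y) = 0 := by
    simp only [mul_sub, Finset.sum_sub_distrib, ← Finset.sum_mul,
      sum_row_of_mem_rowStochastic hP, one_mul]
    exact sub_eq_zero.mpr (congrFun hh x).symm
  have hz := (Finset.sum_eq_zero_iff_of_nonneg fun y _ =>
    mul_nonneg (nonneg_of_mem_rowStochastic hP) (sub_nonneg.mpr (hx y))).mp hsum z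
    (Finset.mem_univ z)
  linarith [(mul_eq_zero.mp hz).resolve_left hxz.ne']

theorem pow_mulVec_eq_self {h : Ω → ℝ} (hh : P *ᵥ h = h) (k : ℕ) : (P ^ k) *ᵥ h = h := by
  induction k with
  | zero => simp
  | succ k ih => rw [pow_succ, ← mulVec_mulVec, hh, ih]

theorem eq_const_of_mulVec_eq_self (hP : P ∈ rowStochastic ℝ Ω)
    (hirr : ∀ x y, ∃ k : ℕ, 0 < (P ^ k) x y) {h : Ω → ℝ} (hh : P *ᵥ h = h) (x y : Ω) :
    h x = h y := by
  obtain ⟨x₀, -, hx₀⟩ := Finset.univ.exists_max_image h ⟨x, Finset.mem_univ x⟩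
  have key (z : Ω) : h z = h x₀ := by
    obtain ⟨k, hk⟩ := hirr x₀ z
    exact apply_eq_of_isMax_of_mulVec_eq_self (pow_mem hP k) (pow_mulVec_eq_self hh k)
      (fun y => hx₀ y (Finset.mem_univ y)) hk
  rw [key x, key y]

theorem mul_pow_apply_eq_of_reversible {π : Ω → ℝ} (hrev : ∀ x y, π x * P x y = π y * P y x)
    (k : ℕ) (x y : Ω) : π x * (P ^ k) x y = π y * (P ^ k) y x := by
  have hP : SemiconjBy (diagonal π) P Pᵀ := by
    ext x y
    simp [diagonal_mul, mul_diagonal, hrev x y, mul_comm]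
  have := congrFun₂ (hP.pow_right k) x y
  simp only [diagonal_mul, ← transpose_pow, mul_diagonal, transpose_apply] at this
  linarith

theorem pos_of_reversible (hP : P ∈ rowStochastic ℝ Ω) (hirr : ∀ x y, ∃ k : ℕ, 0 < (P ^ k) x y)
    {π : Ω → ℝ} (hπ1 : ∑ x, π x = 1) (hrev : ∀ x y, π x * P x y = π y * P y x) (y : Ω) :
    0 < π y := by
  obtain ⟨x, -, hx⟩ := Finset.exists_lt_of_sum_lt (by simp [hπ1] : ∑ _ : Ω, (0 : ℝ) < ∑ x, π x)
  obtain ⟨k, hk⟩ := hirr x y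
  have := mul_pow_apply_eq_of_reversible hrev k x y
  exact pos_of_mul_pos_left (this ▸ mul_pos hx hk) ((pow_mem hP k).1 y x)

theorem spectrum_diagonal_mul_mul_diagonal_inv {d : Ω → ℝ} (hd : ∀ x, d x ≠ 0) :
    spectrum ℝ (diagonal d * P * diagonal d⁻¹) = spectrum ℝ P := by
  have hdd : diagonal d * diagonal d⁻¹ = 1 := by
    simp [diagonal_mul_diagonal, mul_inv_cancel₀ (hd _)]
  exact spectrum.units_conjugate (u := ⟨diagonal d, diagonal d⁻¹, hdd, by
    simp [diagonal_mul_diagonal, inv_mul_cancel₀ (hd _)]⟩)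

theorem diagonal_mul_mul_diagonal_inv_mulVec {d : Ω → ℝ} (hd : ∀ x, d x ≠ 0) (h : Ω → ℝ) :
    (diagonal d * P * diagonal d⁻¹) *ᵥ (d * h) = d * (P *ᵥ h) := by
  have : diagonal d⁻¹ *ᵥ (d * h) = h := by
    ext x; simp [mulVec_diagonal, inv_mul_cancel_left₀ (hd x)]
  rw [← mulVec_mulVec, ← mulVec_mulVec, this]
  ext x
  exact mulVec_diagonal d _ x

variable {π : Ω → ℝ}

noncomputable def symmetrization (P : Matrix Ω Ω ℝ) (π : Ω → ℝ) : Matrix Ω Ω ℝ :=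
  diagonal (Real.sqrt ∘ π) * P * diagonal (Real.sqrt ∘ π)⁻¹

theorem isHermitian_symmetrization (hπ : ∀ x, 0 < π x)
    (hrev : ∀ x y, π x * P x y = π y * P y x) : (symmetrization P π).IsHermitian := by
  ext x y
  have hx := Real.sqrt_pos.mpr (hπ x)
  have hy := Real.sqrt_pos.mpr (hπ y)
  simp only [symmetrization, conjTranspose_apply, star_trivial, mul_diagonal, diagonal_mul,
    Pi.inv_apply, Function.comp_apply]
  field_simp
  rw [Real.sq_sqrt (hπ x).le, Real.sq_sqrt (hπ y).le, hrev]

theorem toEuclideanLin_symmetrization_toLp (hπ : ∀ x, 0 < π x) (h : Ω → ℝ) :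
    toEuclideanLin (symmetrization P π) (toLp 2 ((Real.sqrt ∘ π) * h)) =
      toLp 2 ((Real.sqrt ∘ π) * (P *ᵥ h)) := by
  rw [toLpLin_toLp, toLin'_apply, symmetrization,
    diagonal_mul_mul_diagonal_inv_mulVec (d := Real.sqrt ∘ π)
      fun x => (Real.sqrt_pos.mpr (hπ x)).ne']

theorem toLp_sqrt_mul_mem_orthogonal_eigenspace_one (hP : P ∈ rowStochastic ℝ Ω)
    (hirr : ∀ x y, ∃ k : ℕ, 0 < (P ^ k) x y) (hπ : ∀ x, 0 < π x) {g : Ω → ℝ}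
    (hg : ∑ x, π x * g x = 0) :
    toLp 2 ((Real.sqrt ∘ π) * g) ∈ (eigenspace (toEuclideanLin (symmetrization P π)) 1)ᗮ := by
  have hs (x : Ω) : (Real.sqrt ∘ π) x ≠ 0 := (Real.sqrt_pos.mpr (hπ x)).ne'
  refine (Submodule.mem_orthogonal' _ _).mpr fun w hw => ?_
  set h := (Real.sqrt ∘ π)⁻¹ * ofLp w
  have hw' : w = toLp 2 ((Real.sqrt ∘ π) * h) := by
    ext x; simp [h, mul_inv_cancel_left₀ (Real.sqrt_pos.mpr (hπ x)).ne']
  rw [mem_eigenspace_iff, one_smul, hw', toEuclideanLin_symmetrization_toLp hπ] at hw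
  have hPh : P *ᵥ h = h := funext fun x =>
    mul_left_cancel₀ (hs x) (congrFun (congrArg ofLp hw) x)
  rw [hw', inner_toLp_sqrt_mul fun x => (hπ x).le]
  rcases isEmpty_or_nonempty Ω with hΩ | ⟨⟨x₀⟩⟩
  · simp
  simp only [eq_const_of_mulVec_eq_self hP hirr hPh _ x₀, mul_comm _ (h x₀), ← Finset.mul_sum,
    hg, mul_zero]

/-- The right-hand side is the Dirichlet form `⟨g, (I - P) g⟩_π`. -/
theorem one_sub_sSup_spectrum_mul_le (hP : P ∈ rowStochastic ℝ Ω)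
    (hirr : ∀ x y, ∃ k : ℕ, 0 < (P ^ k) x y) (hπ : ∀ x, 0 < π x)
    (hrev : ∀ x y, π x * P x y = π y * P y x) {g : Ω → ℝ} (hg : ∑ x, π x * g x = 0) :
    (1 - sSup (spectrum ℝ P \ {1})) * ∑ x, π x * g x ^ 2 ≤
      ∑ x, π x * g x * (g x - (P *ᵥ g) x) := by
  set v := toLp 2 ((Real.sqrt ∘ π) * g)
  by_cases hv0 : v = 0
  · have hg0 : g = 0 := funext fun x =>
      (mul_eq_zero.mp (congrFun (congrArg ofLp hv0) x)).resolve_left (Real.sqrt_pos.mpr (hπ x)).ne'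
    simp [hg0]
  have hT := isSymmetric_toEuclideanLin_iff.mpr (isHermitian_symmetrization hπ hrev)
  obtain ⟨μ, hμ, hμ1, hle⟩ := hT.exists_hasEigenvalue_ne_re_inner_le 1
    (toLp_sqrt_mul_mem_orthogonal_eigenspace_one hP hirr hπ hg) hv0
  have hμP : μ ∈ spectrum ℝ P := by
    rw [← spectrum_diagonal_mul_mul_diagonal_inv (d := Real.sqrt ∘ π)
      fun x => (Real.sqrt_pos.mpr (hπ x)).ne',
      ← symmetrization, ← spectrum_toLpLin 2]
    exact hμ.mem_spectrum
  have hμle : μ ≤ sSup (spectrum ℝ P \ {1}) :=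
    le_csSup ⟨1, fun _ h => le_one_of_mem_spectrum_of_mem_rowStochastic hP h.1⟩ ⟨hμP, hμ1⟩
  rw [RCLike.re_to_real, toEuclideanLin_symmetrization_toLp hπ, ← real_inner_self_eq_norm_sq,
    inner_toLp_sqrt_mul fun x => (hπ x).le, inner_toLp_sqrt_mul fun x => (hπ x).le] at hle
  have hN : 0 ≤ ∑ x, π x * g x ^ 2 :=
    Finset.sum_nonneg fun x _ => mul_nonneg (hπ x).le (sq_nonneg _)
  have hQ : ∑ x, π x * (P *ᵥ g) x * g x = ∑ x, π x * g x * (P *ᵥ g) x :=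
    Finset.sum_congr rfl fun x _ => by ring
  calc (1 - sSup (spectrum ℝ P \ {1})) * ∑ x, π x * g x ^ 2
      ≤ (1 - μ) * ∑ x, π x * g x ^ 2 := by gcongr
    _ ≤ ∑ x, π x * g x * (g x - (P *ᵥ g) x) := by
      simp only [mul_sub, Finset.sum_sub_distrib, sq, ← mul_assoc, ← hQ]
      linarith

theorem sum_mul_sub_mulVec_le_sum_indicator (hP : P ∈ rowStochastic ℝ Ω) {π : Ω → ℝ}
    (hπ : ∀ x, 0 ≤ π x) (hstat : ∀ y, ∑ x, π x * P x y = π y) {B : Set Ω} {g : Ω → ℝ}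
    (hg : ∀ x y, 0 < P x y → g x * (g x - g y) ≤ B.indicator 1 y) :
    ∑ x, π x * g x * (g x - (P *ᵥ g) x) ≤ ∑ x, B.indicator π x := calc
  ∑ x, π x * g x * (g x - (P *ᵥ g) x) = ∑ x, ∑ y, π x * P x y * (g x * (g x - g y)) := by
    refine Finset.sum_congr rfl fun x _ => ?_
    have : ∑ y, π x * P x y * (g x * (g x - g y)) =
        π x * g x * ((∑ y, P x y) * g x - ∑ y, P x y * g y) := by
      simp only [Finset.sum_mul, Finset.mul_sum, ← Finset.sum_sub_distrib]
      exact Finset.sum_congr rfl fun y _ => by ring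
    rw [this, sum_row_of_mem_rowStochastic hP, one_mul]
    rfl
  _ ≤ ∑ x, ∑ y, π x * P x y * B.indicator 1 y := by
    refine Finset.sum_le_sum fun x _ => Finset.sum_le_sum fun y _ => ?_
    rcases (nonneg_of_mem_rowStochastic hP (i := x) (j := y)).lt_or_eq with hxy | hxy
    · exact mul_le_mul_of_nonneg_left (hg x y hxy) (mul_nonneg (hπ x) hxy.le)
    · simp [← hxy]
  _ = ∑ y, B.indicator π y := by
    rw [Finset.sum_comm]
    refine Finset.sum_congr rfl fun y _ => ?_
    rw [← Finset.sum_mul, hstat]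
    by_cases hy : y ∈ B <;> simp [hy]

theorem one_sub_sSup_spectrum_mul_le_of_bottleneck (hP : P ∈ rowStochastic ℝ Ω)
    (hirr : ∀ x y, ∃ k : ℕ, 0 < (P ^ k) x y) {π : Ω → ℝ} (hπ : ∀ x, 0 < π x)
    (hrev : ∀ x y, π x * P x y = π y * P y x) {A A' B : Set Ω} (hAA' : Disjoint A A')
    (hAB : Disjoint A B) (hA'B : Disjoint A' B)
    (hmass : ∑ x, A'.indicator π x = ∑ x, A.indicator π x)
    (hA : ∀ x y, 0 < P x y → x ∈ A → y ∉ B → y ∈ A)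
    (hA' : ∀ x y, 0 < P x y → x ∈ A' → y ∉ B → y ∈ A') :
    (1 - sSup (spectrum ℝ P \ {1})) * (2 * ∑ x, A.indicator π x) ≤ ∑ x, B.indicator π x := by
  set g : Ω → ℝ := A.indicator 1 - A'.indicator 1
  have hπg (x : Ω) : π x * g x = A.indicator π x - A'.indicator π x := by
    by_cases hxA : x ∈ A <;> by_cases hxA' : x ∈ A' <;> simp [g, hxA, hxA']
  have hπg2 (x : Ω) : π x * g x ^ 2 = A.indicator π x + A'.indicator π x := by
    by_cases hxA : x ∈ A
    · simp [g, hxA, Set.disjoint_left.mp hAA' hxA]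
    · by_cases hxA' : x ∈ A' <;> simp [g, hxA, hxA']
  have hg : ∑ x, π x * g x = 0 := by simp [hπg, Finset.sum_sub_distrib, hmass]
  have hstat (y : Ω) : ∑ x, π x * P x y = π y := by
    simp [hrev _ y, ← Finset.mul_sum, sum_row_of_mem_rowStochastic hP]
  calc (1 - sSup (spectrum ℝ P \ {1})) * (2 * ∑ x, A.indicator π x)
      = (1 - sSup (spectrum ℝ P \ {1})) * ∑ x, π x * g x ^ 2 := by
        simp [hπg2, Finset.sum_add_distrib, hmass, two_mul]
    _ ≤ ∑ x, π x * g x * (g x - (P *ᵥ g) x) := one_sub_sSup_spectrum_mul_le hP hirr hπ hrev hg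
    _ ≤ ∑ x, B.indicator π x :=
      sum_mul_sub_mulVec_le_sum_indicator hP (fun x => (hπ x).le) hstat fun x y hxy =>
        indicator_sub_indicator_mul_sub_le hAA' hAB hA'B (hA x y hxy) (hA' x y hxy)

end Markov

theorem stmt19_general {Ω : Type*} [Fintype Ω] [DecidableEq Ω]
    (P : Matrix Ω Ω ℝ) (hnn : ∀ x y, 0 ≤ P x y) (hrow : ∀ x, ∑ y, P x y = 1)
    (π : Ω → ℝ) (hπ1 : ∑ x, π x = 1)
    (hrev : ∀ x y, π x * P x y = π y * P y x)
    (hirr : ∀ x y, ∃ k : ℕ, 0 < (P ^ k) x y)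
    (S S' B : Set Ω) (hSB : Disjoint S B)
    (hSne : S.Nonempty)
    (σ : Ω → Ω) (hinv : ∀ x, σ (σ x) = x) (hπσ : ∀ x, π (σ x) = π x)
    (hPσ : ∀ x y, P (σ x) (σ y) = P x y)
    (hσS : σ '' S = S') (hσB : σ '' B = B)
    (hpass : ∀ (k : ℕ) (w : ℕ → Ω), w 0 ∈ S → w k ∈ S' →
      (∀ i < k, 0 < P (w i) (w (i + 1))) → ∃ i ≤ k, w i ∈ B)
    (A : Set Ω)
    (hA : A = {x | ∃ (k : ℕ) (w : ℕ → Ω), w 0 ∈ S ∧ w k = x ∧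
      (∀ i < k, 0 < P (w i) (w (i + 1))) ∧ ∀ i ≤ k, w i ∉ B}) :
    (∑ᶠ x ∈ A, π x) ≤ 1 / 2 ∧
    1 - sSup (spectrum ℝ P \ {1}) ≤
      2 * (∑ᶠ x ∈ B, π x) / (∑ᶠ x ∈ S, π x) := by
  have hP : P ∈ rowStochastic ℝ Ω := mem_rowStochastic_iff_sum.mpr ⟨hnn, hrow⟩
  have hπ : ∀ x, 0 < π x := pos_of_reversible hP hirr hπ1 hrev
  have hσ : Function.Involutive σ := hinv
  have hσB' (x : Ω) : σ x ∈ B ↔ x ∈ B := by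
    rw [← Set.mem_preimage, ← hσ.image_eq_preimage_symm, hσB]
  have := stepAvoiding_symm (B := B) hπ hrev
  rw [setOf_exists_seq_eq_reach hSB] at hA
  have hdisj : Disjoint A (σ '' A) := hA ▸ disjoint_reach_image_reach
    (fun _ _ => StepAvoiding.map hPσ hσB') fun s hs t ht =>
      not_reflTransGen_stepAvoiding hSB hpass hs (hσS ▸ Set.mem_image_of_mem σ ht)
  have hAB : Disjoint A B := hA ▸ disjoint_reach_stepAvoiding hSB
  have hclosed x y (hxy : 0 < P x y) (hx : x ∈ A) (hy : y ∉ B) : y ∈ A :=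
    hA ▸ mem_reach_stepAvoiding hSB hxy (hA ▸ hx) hy
  have hmass := sum_indicator_image_of_involutive hσ hπσ A
  have hgap := one_sub_sSup_spectrum_mul_le_of_bottleneck hP hirr hπ hrev hdisj hAB
    (hσB ▸ (Set.disjoint_image_iff hσ.injective).mpr hAB) hmass hclosed
    (image_closed_of_closed hσ hPσ hσB' hclosed)
  simp only [finsum_mem_def]
  simp only [finsum_eq_sum_of_fintype]
  exact ⟨sum_indicator_le_half (fun x => (hπ x).le) hπ1 hdisj hmass,
    le_two_mul_div_of_subset hπ (fun s hs => hA ▸ ⟨s, hs, .refl⟩) hSne hgap⟩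

/-- Bottleneck bound on the spectral gap: if a reversible irreducible chain
P has disjoint sets S, S', B and a π- and P-preserving involution mapping S
onto S' and B onto B, such that every positive-probability path from S to S'
passes through B, then for A the set of states reachable from S avoiding B
we have π(A) ≤ 1/2 and 1 - λ₂(P) ≤ 2π(B)/π(S). -/
theorem stmt19 {Ω : Type*} [Fintype Ω] [DecidableEq Ω]
    (P : Matrix Ω Ω ℝ) (hnn : ∀ x y, 0 ≤ P x y) (hrow : ∀ x, ∑ y, P x y = 1)
    (π : Ω → ℝ) (hπ0 : ∀ x, 0 ≤ π x) (hπ1 : ∑ x, π x = 1)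
    (hrev : ∀ x y, π x * P x y = π y * P y x)
    (hirr : ∀ x y, ∃ k : ℕ, 0 < (P ^ k) x y)
    (S S' B : Set Ω) (hSS' : Disjoint S S') (hSB : Disjoint S B)
    (hS'B : Disjoint S' B) (hSne : S.Nonempty)
    (σ : Ω → Ω) (hinv : ∀ x, σ (σ x) = x) (hπσ : ∀ x, π (σ x) = π x)
    (hPσ : ∀ x y, P (σ x) (σ y) = P x y)
    (hσS : σ '' S = S') (hσB : σ '' B = B)
    (hpass : ∀ (k : ℕ) (w : ℕ → Ω), w 0 ∈ S → w k ∈ S' →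
      (∀ i < k, 0 < P (w i) (w (i + 1))) → ∃ i ≤ k, w i ∈ B)
    (A : Set Ω)
    (hA : A = {x | ∃ (k : ℕ) (w : ℕ → Ω), w 0 ∈ S ∧ w k = x ∧
      (∀ i < k, 0 < P (w i) (w (i + 1))) ∧ ∀ i ≤ k, w i ∉ B}) :
    (∑ᶠ x ∈ A, π x) ≤ 1 / 2 ∧
    1 - sSup (spectrum ℝ P \ {1}) ≤
      2 * (∑ᶠ x ∈ B, π x) / (∑ᶠ x ∈ S, π x) :=
  stmt19_general P hnn hrow π hπ1 hrev hirr S S' B hSB hSne σ hinv hπσ hPσ hσS hσB hpass A hA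
end
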